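/- arXiv:1809.02562 — 2 statements merged into one kernel-verified Lean document; each statement's English description precedes it below -/
import Mathlib

section
/- If E = ∅ and the points p_1, …, p_n affinely span ℝ^d, then the weak rigidity matrix satisfies rank(R_W(p)) ≤ dn − (d² + d + 2)/2. -/
open scoped RealInnerProductSpace

noncomputable section

/-- A point in `ℝ^d`. -/
abbrev Pt (d : ℕ) : Type := EuclideanSpace ℝ (Fin d)

/-- A configuration of `n` points in `ℝ^d`, identified with `ℝ^{dn}` (Euclidean norm). -/
abbrev Conf (d n : ℕ) : Type := PiLp 2 (fun _ : Fin n => Pt d)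

/-- Cosine of the angle at vertex `k` subtended by vertices `i` and `j`. -/
def cosAngle {d n : ℕ} (p : Conf d n) (k i j : Fin n) : ℝ :=
  ⟪p i - p k, p j - p k⟫ / (‖p i - p k‖ * ‖p j - p k‖)

/-- The set `χ` of admissible configurations for the angle set `A`. -/
def Chi {d n : ℕ} (A : Finset (Fin n × Fin n × Fin n)) : Set (Conf d n) :=
  {p | ∀ a ∈ A, p a.2.1 ≠ p a.1 ∧ p a.2.2 ≠ p a.1}

/-- The weak rigidity function `F_W`. -/
def FW {d n : ℕ} (E : Finset (Fin n × Fin n)) (A : Finset (Fin n × Fin n × Fin n))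
    (p : Conf d n) : EuclideanSpace ℝ (↥E ⊕ ↥A) :=
  WithLp.toLp 2 (fun x => Sum.elim (fun e : ↥E => ‖p e.1.1 - p e.1.2‖ ^ 2)
    (fun a : ↥A => cosAngle p a.1.1 a.1.2.1 a.1.2.2) x)

/-- The weak rigidity matrix `R_W(p)`: Jacobian (Fréchet derivative) of `F_W` at `p`. -/
def RW {d n : ℕ} (E : Finset (Fin n × Fin n)) (A : Finset (Fin n × Fin n × Fin n))
    (p : Conf d n) : Conf d n →L[ℝ] EuclideanSpace ℝ (↥E ⊕ ↥A) :=
  fderiv ℝ (FW E A) p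

/-- Rank of the weak rigidity matrix. -/
def rankRW {d n : ℕ} (E : Finset (Fin n × Fin n)) (A : Finset (Fin n × Fin n × Fin n))
    (p : Conf d n) : ℕ :=
  Module.finrank ℝ ↥(LinearMap.range (RW E A p).toLinearMap)

/-- `J` is skew-symmetric. -/
def IsSkewAdj {d : ℕ} (J : Pt d →ₗ[ℝ] Pt d) : Prop :=
  ∀ x y : Pt d, ⟪J x, y⟫ = - ⟪x, J y⟫

/-- Trivial infinitesimal motions (translations and rotations). -/
def trivialMotions {d n : ℕ} (p : Conf d n) : Set (Conf d n) :=
  {δ | ∃ (v : Pt d) (J : Pt d →ₗ[ℝ] Pt d), IsSkewAdj J ∧ ∀ i, δ i = v + J (p i)}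

/-- Trivial infinitesimal motions including scaling. -/
def trivialMotionsScale {d n : ℕ} (p : Conf d n) : Set (Conf d n) :=
  {δ | ∃ (v : Pt d) (J : Pt d →ₗ[ℝ] Pt d) (c : ℝ),
    IsSkewAdj J ∧ ∀ i, δ i = v + J (p i) + c • p i}

/-- Congruence of two configurations. -/
def ConfCongruent {d n : ℕ} (p q : Conf d n) : Prop :=
  ∀ i j, ‖q i - q j‖ = ‖p i - p j‖

/-- Proportional congruence of two configurations. -/
def PropCongruent {d n : ℕ} (p q : Conf d n) : Prop :=
  ∃ C : ℝ, 0 < C ∧ ∀ i j, ‖q i - q j‖ = C * ‖p i - p j‖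

/-- Generalized weak rigidity (case `E ≠ ∅`). -/
def IsGWR {d n : ℕ} (E : Finset (Fin n × Fin n)) (A : Finset (Fin n × Fin n × Fin n))
    (p : Conf d n) : Prop :=
  ∃ U ∈ nhds p, U ⊆ Chi A ∧ ∀ q ∈ U, FW E A q = FW E A p → ConfCongruent p q

/-- Generalized weak rigidity (case `E = ∅`, up to scaling). -/
def IsGWRScale {d n : ℕ} (E : Finset (Fin n × Fin n)) (A : Finset (Fin n × Fin n × Fin n))
    (p : Conf d n) : Prop :=
  ∃ U ∈ nhds p, U ⊆ Chi A ∧ ∀ q ∈ U, FW E A q = FW E A p → PropCongruent p q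

/-- `p` is a regular point of `F_W`: its rank attains the maximum over `χ`. -/
def IsRegularPt {d n : ℕ} (E : Finset (Fin n × Fin n)) (A : Finset (Fin n × Fin n × Fin n))
    (p : Conf d n) : Prop :=
  p ∈ Chi A ∧ ∀ q ∈ (Chi A : Set (Conf d n)), rankRW E A q ≤ rankRW E A p

/-- The gradient-flow vector field `u(p) = -R_W(p)ᵀ (F_W(p) - c)`. -/
def gradFlowVF {d n : ℕ} (E : Finset (Fin n × Fin n)) (A : Finset (Fin n × Fin n × Fin n))
    (c : EuclideanSpace ℝ (↥E ⊕ ↥A)) (p : Conf d n) : Conf d n :=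
  -(ContinuousLinearMap.adjoint (RW E A p)) (FW E A p - c)

set_option maxHeartbeats 1000000 in
set_option synthInstance.maxHeartbeats 400000 in
/-- `p : [0,∞) → χ` is a solution of the gradient flow `ṗ = -R_W(p)ᵀ e(p)`. -/
def IsGradFlowSol {d n : ℕ} (E : Finset (Fin n × Fin n)) (A : Finset (Fin n × Fin n × Fin n))
    (c : EuclideanSpace ℝ (↥E ⊕ ↥A)) (p : ℝ → Conf d n) : Prop :=
  (∀ t : ℝ, 0 ≤ t → p t ∈ Chi A) ∧
  ∀ t : ℝ, 0 ≤ t → HasDerivAt p (gradFlowVF E A c (p t)) t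

/-- Centroid of a configuration. -/
def centroid {d n : ℕ} (x : Conf d n) : Pt d := (n : ℝ)⁻¹ • ∑ i, x i

end

/-!
Angle cosines are invariant under similarities, so when `E = ∅` every infinitesimal similarity
`δᵢ = v + J pᵢ + c pᵢ` (`J` skew) lies in the kernel of `R_W(p)`: along the line `p + t δ` the
numerator `⟪x, y⟫` and the denominator `‖x‖ ‖y‖` of each cosine both have logarithmic derivative
`2c` at `t = 0`. If the `pᵢ` affinely span `ℝ^d`, then `(v, J, c) ↦ δ` is injective on skew `J`,
so the kernel has dimension at least `d + d(d-1)/2 + 1 = (d² + d + 2)/2`; rank–nullity concludes.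
-/

section Calculus

variable {F : Type*} [NormedAddCommGroup F] [InnerProductSpace ℝ F]

theorem HasDerivAt.div_of_logDeriv_eq {N D : ℝ → ℝ} {a t : ℝ} (hN : HasDerivAt N (a * N t) t)
    (hD : HasDerivAt D (a * D t) t) (hDt : D t ≠ 0) :
    HasDerivAt (fun s => N s / D s) 0 t :=
  (hN.fun_div hD hDt).congr_deriv (by ring)

theorem HasDerivAt.norm_of_ne_zero {f : ℝ → F} {f' : F} {t : ℝ} (hf : HasDerivAt f f' t)
    (h0 : f t ≠ 0) : HasDerivAt (fun s => ‖f s‖) (⟪f t, f'⟫ / ‖f t‖) t := by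
  have h := hf.norm_sq.sqrt (by positivity)
  simp only [Real.sqrt_sq (norm_nonneg _)] at h
  exact h.congr_deriv (mul_div_mul_left _ _ two_ne_zero)

theorem hasDerivAt_inner_div_norm_mul_norm_of_conformal {T : F →ₗ[ℝ] F} {c : ℝ}
    (hT : ∀ x y, ⟪T x, y⟫ + ⟪x, T y⟫ = 2 * c * ⟪x, y⟫) {x y : F} (hx : x ≠ 0) (hy : y ≠ 0) :
    HasDerivAt (fun t : ℝ => ⟪x + t • T x, y + t • T y⟫ / (‖x + t • T x‖ * ‖y + t • T y‖))
      0 0 := by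
  have line (z : F) : HasDerivAt (fun t : ℝ => z + t • T z) (T z) 0 := by
    simpa using ((hasDerivAt_id (0 : ℝ)).smul_const (T z)).const_add z
  have norm_line (z : F) (hz : z ≠ 0) :
      HasDerivAt (fun t : ℝ => ‖z + t • T z‖) (c * ‖z + (0 : ℝ) • T z‖) 0 := by
    have hzz : ⟪z, T z⟫ = c * ‖z‖ ^ 2 := by
      have := hT z z
      rw [real_inner_comm z (T z), real_inner_self_eq_norm_sq] at this
      linarith
    refine ((line z).norm_of_ne_zero (by simpa using hz)).congr_deriv ?_
    simp only [zero_smul, add_zero, hzz]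
    field_simp
  refine HasDerivAt.div_of_logDeriv_eq (a := 2 * c) ?_ ?_ (by simp [hx, hy])
  · refine ((line x).inner ℝ (line y)).congr_deriv ?_
    simp only [zero_smul, add_zero]
    linarith [hT x y, real_inner_comm x (T y)]
  · exact ((norm_line x hx).fun_mul (norm_line y hy)).congr_deriv (by ring)

end Calculus

section InfinitesimalSimilarity

variable {d n : ℕ}

theorem IsSkewAdj.inner_add_smul_id {J : Pt d →ₗ[ℝ] Pt d} (hJ : IsSkewAdj J) (c : ℝ)
    (x y : Pt d) :
    ⟪(J + c • LinearMap.id : Pt d →ₗ[ℝ] Pt d) x, y⟫ +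
      ⟪x, (J + c • LinearMap.id : Pt d →ₗ[ℝ] Pt d) y⟫ = 2 * c * ⟪x, y⟫ := by
  simp only [LinearMap.add_apply, LinearMap.smul_apply, LinearMap.id_apply, inner_add_left,
    inner_add_right, real_inner_smul_left, real_inner_smul_right, hJ x y]
  ring

theorem hasDerivAt_cosAngle_add_smul_of_mem_trivialMotionsScale {p δ : Conf d n}
    (hδ : δ ∈ trivialMotionsScale p) {k i j : Fin n} (hi : p i ≠ p k) (hj : p j ≠ p k) :
    HasDerivAt (fun t : ℝ => cosAngle (p + t • δ) k i j) 0 0 := by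
  obtain ⟨v, J, c, hJ, hδ⟩ := hδ
  have hdiff (l : Fin n) (t : ℝ) : (p + t • δ) l - (p + t • δ) k =
      (p l - p k) + t • (J + c • LinearMap.id : Pt d →ₗ[ℝ] Pt d) (p l - p k) := by
    simp only [PiLp.add_apply, PiLp.smul_apply, hδ, map_sub, LinearMap.add_apply,
      LinearMap.smul_apply, LinearMap.id_apply]
    module
  simpa only [cosAngle, hdiff] using hasDerivAt_inner_div_norm_mul_norm_of_conformal
    (hJ.inner_add_smul_id c) (sub_ne_zero.2 hi) (sub_ne_zero.2 hj)

theorem RW_empty_apply_eq_zero {A : Finset (Fin n × Fin n × Fin n)} {p δ : Conf d n}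
    (hp : p ∈ Chi A) (hδ : δ ∈ trivialMotionsScale p) : RW ∅ A p δ = 0 := by
  by_cases hF : DifferentiableAt ℝ (FW ∅ A) p
  · ext x
    rcases x with ⟨e, he⟩ | ⟨a, ha⟩
    · simp at he
    · have hcomp := ((PiLp.proj 2 (fun _ => ℝ) (Sum.inr ⟨a, ha⟩ : ↥(∅ : Finset _) ⊕ ↥A)
        ).hasFDerivAt.comp p hF.hasFDerivAt).hasLineDerivAt δ
      exact HasDerivAt.unique hcomp
        (hasDerivAt_cosAngle_add_smul_of_mem_trivialMotionsScale hδ (hp a ha).1 (hp a ha).2)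
  · simp [RW, fderiv_zero_of_not_differentiableAt hF]

end InfinitesimalSimilarity

theorem Fintype.card_subtype_fst_lt_snd {α : Type*} [Fintype α] [LinearOrder α] :
    Fintype.card {q : α × α // q.1 < q.2} = (Fintype.card α).choose 2 := by
  rw [Fintype.card_subtype, Fintype.card_product_filter_lt]

section RotationGenerators

variable {d : ℕ}

noncomputable def rotGen (l m : Fin d) : Pt d →ₗ[ℝ] Pt d :=
  (EuclideanSpace.proj m : Pt d →L[ℝ] ℝ).smulRight (EuclideanSpace.single l (1 : ℝ))
    - (EuclideanSpace.proj l : Pt d →L[ℝ] ℝ).smulRight (EuclideanSpace.single m (1 : ℝ))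

theorem rotGen_apply (l m : Fin d) (x : Pt d) :
    rotGen l m x =
      x m • EuclideanSpace.single l (1 : ℝ) - x l • EuclideanSpace.single m (1 : ℝ) :=
  rfl

theorem isSkewAdj_rotGen (l m : Fin d) : IsSkewAdj (rotGen l m) := by
  intro x y
  simp only [rotGen_apply, inner_sub_left, inner_sub_right, real_inner_smul_left,
    real_inner_smul_right, EuclideanSpace.inner_single_left, EuclideanSpace.inner_single_right,
    map_one, one_mul, conj_trivial]
  ring

theorem rotGen_single_apply (q q' : {q : Fin d × Fin d // q.1 < q.2}) :
    rotGen q'.1.1 q'.1.2 (EuclideanSpace.single q.1.2 (1 : ℝ)) q.1.1 =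
      if q' = q then 1 else 0 := by
  obtain ⟨⟨l, m⟩, h⟩ := q
  obtain ⟨⟨l', m'⟩, h'⟩ := q'
  dsimp only at h h'
  simp only [rotGen_apply, PiLp.sub_apply, PiLp.smul_apply, PiLp.single_apply, smul_eq_mul,
    Subtype.mk.injEq, Prod.mk.injEq]
  split_ifs <;> (try norm_num) <;> omega

theorem linearIndependent_rotGen :
    LinearIndependent ℝ fun q : {q : Fin d × Fin d // q.1 < q.2} => rotGen q.1.1 q.1.2 := by
  rw [Fintype.linearIndependent_iff]
  intro g hg q
  have := congrArg (· q.1.1) (LinearMap.congr_fun hg (EuclideanSpace.single q.1.2 (1 : ℝ)))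
  simp only [LinearMap.sum_apply, LinearMap.smul_apply] at this
  rw [WithLp.ofLp_sum, Finset.sum_apply] at this
  simpa [rotGen_single_apply] using this

end RotationGenerators

section SimilarityMotion

variable {d n : ℕ}

noncomputable def similarityMotion (p : Conf d n) :
    Pt d × (Pt d →ₗ[ℝ] Pt d) × ℝ →ₗ[ℝ] Conf d n where
  toFun w := WithLp.toLp 2 fun i => w.1 + w.2.1 (p i) + w.2.2 • p i
  map_add' a b := by
    ext i : 2
    simp only [Prod.fst_add, Prod.snd_add, LinearMap.add_apply, add_smul, PiLp.add_apply]
    abel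
  map_smul' r a := by
    ext i : 2
    simp only [Prod.smul_fst, Prod.smul_snd, LinearMap.smul_apply, smul_eq_mul, mul_smul,
      RingHom.id_apply, PiLp.smul_apply, smul_add]

theorem similarityMotion_apply (p : Conf d n) (w : Pt d × (Pt d →ₗ[ℝ] Pt d) × ℝ) (i : Fin n) :
    similarityMotion p w i = w.1 + w.2.1 (p i) + w.2.2 • p i :=
  rfl

theorem similarityMotion_mem_trivialMotionsScale (p : Conf d n)
    {w : Pt d × (Pt d →ₗ[ℝ] Pt d) × ℝ} (hw : IsSkewAdj w.2.1) :
    similarityMotion p w ∈ trivialMotionsScale p :=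
  ⟨w.1, w.2.1, w.2.2, hw, similarityMotion_apply p w⟩

def skewAdjSubmodule (d : ℕ) : Submodule ℝ (Pt d →ₗ[ℝ] Pt d) where
  carrier := {J | IsSkewAdj J}
  add_mem' {J K} hJ hK x y := by
    simp only [LinearMap.add_apply, inner_add_left, inner_add_right, hJ x y, hK x y]
    ring
  zero_mem' x y := by simp
  smul_mem' r J hJ x y := by
    simp only [LinearMap.smul_apply, real_inner_smul_left, real_inner_smul_right, hJ x y]
    ring

@[simp]
theorem mem_skewAdjSubmodule {J : Pt d →ₗ[ℝ] Pt d} : J ∈ skewAdjSubmodule d ↔ IsSkewAdj J :=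
  Iff.rfl

theorem eq_zero_of_similarityMotion_eq_zero (hd : 0 < d) {p : Conf d n}
    (hspan : affineSpan ℝ (Set.range fun i => p i) = ⊤) {w : Pt d × (Pt d →ₗ[ℝ] Pt d) × ℝ}
    (hw : IsSkewAdj w.2.1) (h : similarityMotion p w = 0) : w = 0 := by
  obtain ⟨v, J, c⟩ := w
  have hpt (i : Fin n) : v + J (p i) + c • p i = 0 := congrArg (· i) h
  have hT : (J + c • LinearMap.id : Pt d →ₗ[ℝ] Pt d) = 0 := by
    have hker : vectorSpan ℝ (Set.range fun i => p i) ≤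
        LinearMap.ker (J + c • LinearMap.id : Pt d →ₗ[ℝ] Pt d) := by
      rw [vectorSpan_def, Submodule.span_le]
      rintro _ ⟨_, ⟨i, rfl⟩, _, ⟨j, rfl⟩, rfl⟩
      have := congrArg₂ (· - ·) (hpt i) (hpt j)
      simp only [sub_zero] at this
      simp only [SetLike.mem_coe, LinearMap.mem_ker, vsub_eq_sub, LinearMap.add_apply,
        LinearMap.smul_apply, LinearMap.id_apply, map_sub, ← this]
      abel
    rwa [AffineSubspace.vectorSpan_eq_top_of_affineSpan_eq_top ℝ _ _ hspan, top_le_iff,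
      LinearMap.ker_eq_top] at hker
  have hc : c = 0 := by
    simpa [hT] using hw.inner_add_smul_id c (EuclideanSpace.single ⟨0, hd⟩ 1)
      (EuclideanSpace.single ⟨0, hd⟩ 1)
  have hJ : J = 0 := by simpa [hc] using hT
  obtain ⟨_, i, -⟩ : (Set.range fun i => p i).Nonempty :=
    (affineSpan_nonempty (k := ℝ)).1 (by simp [hspan])
  have hv : v = 0 := by simpa [hJ, hc] using hpt i
  simp [hv, hJ, hc]

end SimilarityMotion

section KernelDimension

variable {d n : ℕ}

noncomputable def similarityParams (d : ℕ) :
    Fin d ⊕ ({q : Fin d × Fin d // q.1 < q.2} ⊕ Unit) → Pt d × (Pt d →ₗ[ℝ] Pt d) × ℝ :=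
  Sum.elim (LinearMap.inl ℝ _ _ ∘ fun l => EuclideanSpace.single l (1 : ℝ))
    (LinearMap.inr ℝ _ _ ∘ Sum.elim (LinearMap.inl ℝ _ _ ∘ fun q => rotGen q.1.1 q.1.2)
      (LinearMap.inr ℝ _ _ ∘ fun _ => (1 : ℝ)))

theorem linearIndependent_similarityParams : LinearIndependent ℝ (similarityParams d) :=
  linearIndependent_inl_union_inr' EuclideanSpace.orthonormal_single.linearIndependent
    (linearIndependent_inl_union_inr' linearIndependent_rotGen
      (linearIndependent_unique_iff.2 one_ne_zero))

theorem span_similarityParams_le :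
    Submodule.span ℝ (Set.range (similarityParams d)) ≤
      (⊤ : Submodule ℝ (Pt d)).prod ((skewAdjSubmodule d).prod ⊤) := by
  rw [Submodule.span_le]
  rintro _ ⟨l | q | u, rfl⟩
  all_goals simp [similarityParams, mem_skewAdjSubmodule, isSkewAdj_rotGen]

theorem linearIndependent_similarityMotion (hd : 0 < d) {p : Conf d n}
    (hspan : affineSpan ℝ (Set.range fun i => p i) = ⊤) :
    LinearIndependent ℝ (similarityMotion p ∘ similarityParams d) :=
  linearIndependent_similarityParams.map <| Submodule.disjoint_def.2 fun _ hw hker =>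
    eq_zero_of_similarityMotion_eq_zero hd hspan
      (Submodule.mem_prod.1 (Submodule.mem_prod.1 (span_similarityParams_le hw)).2).1 hker

theorem finrank_conf : Module.finrank ℝ (Conf d n) = d * n := by
  rw [(WithLp.linearEquiv 2 ℝ (Fin n → Pt d)).finrank_eq, Module.finrank_pi_fintype]
  simp [finrank_euclideanSpace, mul_comm]

theorem le_finrank_ker_RW_empty (hd : 0 < d) {A : Finset (Fin n × Fin n × Fin n)}
    {p : Conf d n} (hp : p ∈ Chi A) (hspan : affineSpan ℝ (Set.range fun i => p i) = ⊤) :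
    d + d.choose 2 + 1 ≤ Module.finrank ℝ (LinearMap.ker (RW ∅ A p).toLinearMap) := by
  have hli := linearIndependent_similarityMotion hd hspan
  have hle : Submodule.span ℝ (Set.range (similarityMotion p ∘ similarityParams d)) ≤
      LinearMap.ker (RW ∅ A p).toLinearMap := by
    rw [Submodule.span_le]
    rintro _ ⟨ix, rfl⟩
    exact RW_empty_apply_eq_zero hp (similarityMotion_mem_trivialMotionsScale p
      (Submodule.mem_prod.1 (Submodule.mem_prod.1
        (span_similarityParams_le (Submodule.subset_span ⟨ix, rfl⟩))).2).1)
  calc d + d.choose 2 + 1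
        = Fintype.card (Fin d ⊕ ({q : Fin d × Fin d // q.1 < q.2} ⊕ Unit)) := by
        simp [Fintype.card_subtype_fst_lt_snd, add_assoc]
    _ = _ := (finrank_span_eq_card hli).symm
    _ ≤ _ := Submodule.finrank_mono hle

end KernelDimension

theorem add_choose_two_add_one (d : ℕ) : d + d.choose 2 + 1 = (d ^ 2 + d + 2) / 2 := by
  have h := Nat.choose_two_right (d + 1)
  rw [Nat.choose_succ_succ, Nat.choose_one_right, Nat.add_sub_cancel] at h
  rw [show d ^ 2 + d + 2 = (d + 1) * d + 1 * 2 by ring, Nat.add_mul_div_right _ _ two_pos, ← h]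

theorem stmt3_general {d n : ℕ}
    (E : Finset (Fin n × Fin n)) (A : Finset (Fin n × Fin n × Fin n))
    (hE : E = ∅)
    (p : Conf d n) (hp : p ∈ Chi A)
    (hspan : affineSpan ℝ (Set.range (fun i => p i)) = ⊤) :
    rankRW E A p ≤ d * n - (d ^ 2 + d + 2) / 2 := by
  subst hE
  have hrank := LinearMap.finrank_range_add_finrank_ker (RW ∅ A p).toLinearMap
  rw [finrank_conf] at hrank
  rcases Nat.eq_zero_or_pos d with rfl | hd
  · simp only [rankRW, zero_mul, zero_tsub] at hrank ⊢
    omega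
  · have hker := le_finrank_ker_RW_empty hd hp hspan
    rw [rankRW, ← add_choose_two_add_one]
    omega

/-- if `E = ∅` and the points affinely span `ℝ^d`, then
`rank(R_W(p)) ≤ dn − (d² + d + 2)/2`. -/
theorem stmt3 {d n : ℕ} (hd : d = 2 ∨ d = 3) (hn : 3 ≤ n)
    (E : Finset (Fin n × Fin n)) (A : Finset (Fin n × Fin n × Fin n))
    (hE : E = ∅)
    (hA : ∀ a ∈ A, a.1 ≠ a.2.1 ∧ a.1 ≠ a.2.2 ∧ a.2.1 ≠ a.2.2)
    (p : Conf d n) (hp : p ∈ Chi A)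
    (hspan : affineSpan ℝ (Set.range (fun i => p i)) = ⊤) :
    rankRW E A p ≤ d * n - (d ^ 2 + d + 2) / 2 :=
  stmt3_general E A hE p hp hspan
end

section
/- Let p, q ∈ χ both be regular points of F_W whose points affinely span ℝ^d. If the framework (G, A, p) is GIWR (ker R_W(p) equals the space of trivial motions at p), then (G, A, q) is GIWR (ker R_W(q) equals the space of trivial motions at q). This holds both for E ≠ ∅ (trivial motions = translations and rotations) and for E = ∅ (trivial motions = translations, rotations, and scalings). -/
open scoped RealInnerProductSpace

/-!
Trivial motions always lie in `ker R_W`: `F_W` is constant along the curves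
`t ↦ (e^{ct} exp(tJ) q_i + t v)_i`, which move the configuration by similarities (by isometries
when `c = 0`, as edge lengths require), so their velocity `v + J q_i + c q_i` is killed by `R_W(q)`.
When the points affinely span `ℝ^d`, `(v, K) ↦ (v + K q_i)_i` is injective, so the space of
trivial motions has a dimension independent of the configuration. At two regular points `R_W`
has the same rank, hence kernels of the same dimension, and the inclusion at `q` is an equality.
-/

open NormedSpace

-- Found through `IsBoundedSMul`: the default instance search through `PiLp` times out.
instance (d n : ℕ) : ContinuousSMul ℝ (Conf d n) := IsBoundedSMul.continuousSMul

lemma LinearMap.eq_ker_of_le_of_finrank_eq {K V W : Type*} [Field K] [AddCommGroup V] [Module K V]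
    [FiniteDimensional K V] [AddCommGroup W] [Module K W] {f g : V →ₗ[K] W} {U : Submodule K V}
    (hU : U ≤ LinearMap.ker g) (hrank : Module.finrank K (range g) = Module.finrank K (range f))
    (hdim : Module.finrank K U = Module.finrank K (ker f)) : U = ker g := by
  refine Submodule.eq_of_le_of_finrank_eq hU ?_
  have := f.finrank_range_add_finrank_ker
  have := g.finrank_range_add_finrank_ker
  omega

lemma ContinuousLinearMap.exp_mem_unitary_of_mem_skewAdjoint {H : Type*} [NormedAddCommGroup H]
    [InnerProductSpace ℝ H] [CompleteSpace H] {J : H →L[ℝ] H} (hJ : J ∈ skewAdjoint (H →L[ℝ] H)) :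
    exp J ∈ unitary (H →L[ℝ] H) := by
  let : NormedAlgebra ℚ (H →L[ℝ] H) := NormedAlgebra.restrictScalars ℚ ℝ _
  exact NormedSpace.exp_mem_unitary_of_mem_skewAdjoint hJ

lemma hasDerivAt_exp_mul_smul_exp_smul_add {H : Type*} [NormedAddCommGroup H] [NormedSpace ℝ H]
    [CompleteSpace H] (J : H →L[ℝ] H) (c : ℝ) (v x : H) :
    HasDerivAt (fun t : ℝ => Real.exp (c * t) • exp (t • J) x + t • v) (c • x + J x + v) 0 := by
  have hexp := (hasDerivAt_exp_smul_const' J (0 : ℝ)).clm_apply (hasDerivAt_const (0 : ℝ) x)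
  have hscal := ((hasDerivAt_id (0 : ℝ)).const_mul c).exp
  refine ((hscal.smul hexp).add ((hasDerivAt_id (0 : ℝ)).smul_const v)).congr_deriv ?_
  simp [zero_smul ℝ J, exp_zero, add_comm]

section Motions

variable {d n : ℕ}

lemma IsSkewAdj.toContinuousLinearMap_mem_skewAdjoint {J : Pt d →ₗ[ℝ] Pt d} (hJ : IsSkewAdj J) :
    LinearMap.toContinuousLinearMap J ∈ skewAdjoint (Pt d →L[ℝ] Pt d) := by
  rw [skewAdjoint.mem_iff, ContinuousLinearMap.star_eq_adjoint]
  refine ContinuousLinearMap.ext fun x => ext_inner_right ℝ fun y => ?_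
  rw [ContinuousLinearMap.adjoint_inner_left, neg_apply, inner_neg_left,
    LinearMap.coe_toContinuousLinearMap', hJ, neg_neg]

lemma cosAngle_toLp_comp {f : Pt d → Pt d} {s : ℝ} (hs : s ≠ 0) {U : Pt d →L[ℝ] Pt d}
    (hU : U ∈ unitary (Pt d →L[ℝ] Pt d)) (hf : ∀ x y, f x - f y = s • U (x - y))
    (q : Conf d n) (k i j : Fin n) :
    cosAngle (WithLp.toLp 2 fun l => f (q l)) k i j = cosAngle q k i j := by
  simp only [cosAngle, hf, real_inner_smul_left, real_inner_smul_right,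
    norm_smul, ContinuousLinearMap.inner_map_map_of_mem_unitary hU,
    ContinuousLinearMap.norm_map_of_mem_unitary hU]
  rw [mul_mul_mul_comm, ← mul_assoc, Real.norm_eq_abs, ← abs_mul, abs_mul_self]
  exact mul_div_mul_left _ _ (mul_self_ne_zero.mpr hs)

lemma FW_toLp_comp {f : Pt d → Pt d} {s : ℝ} (hs : s ≠ 0) {U : Pt d →L[ℝ] Pt d}
    (hU : U ∈ unitary (Pt d →L[ℝ] Pt d)) (hf : ∀ x y, f x - f y = s • U (x - y))
    {E : Finset (Fin n × Fin n)} (A : Finset (Fin n × Fin n × Fin n)) (hsE : s = 1 ∨ E = ∅)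
    (q : Conf d n) : FW E A (WithLp.toLp 2 fun l => f (q l)) = FW E A q := by
  ext (e | a)
  · rcases hsE with rfl | rfl
    · simp only [FW, PiLp.toLp_apply, Sum.elim_inl, hf, one_smul,
        ContinuousLinearMap.norm_map_of_mem_unitary hU]
    · exact absurd e.2 (Finset.notMem_empty _)
  · exact cosAngle_toLp_comp hs hU hf q _ _ _

lemma differentiableAt_FW (E : Finset (Fin n × Fin n)) {A : Finset (Fin n × Fin n × Fin n)}
    {q : Conf d n} (hq : q ∈ Chi A) : DifferentiableAt ℝ (FW E A) q := by
  have hdiff (i j : Fin n) : DifferentiableAt ℝ (fun p : Conf d n => p i - p j) q :=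
    ((PiLp.hasFDerivAt_apply 2 q i).sub (PiLp.hasFDerivAt_apply 2 q j)).differentiableAt
  rw [differentiableAt_piLp]
  rintro (e | a)
  · exact (hdiff _ _).norm_sq ℝ
  · obtain ⟨hi, hj⟩ := hq a.1 a.2
    have hi' : q a.1.2.1 - q a.1.1 ≠ 0 := sub_ne_zero_of_ne hi
    have hj' : q a.1.2.2 - q a.1.1 ≠ 0 := sub_ne_zero_of_ne hj
    show DifferentiableAt ℝ (fun p : Conf d n => cosAngle p a.1.1 a.1.2.1 a.1.2.2) q
    simp only [cosAngle, div_eq_mul_inv]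
    exact ((hdiff _ _).inner ℝ (hdiff _ _)).fun_mul
      ((((hdiff _ _).norm ℝ hi').fun_mul ((hdiff _ _).norm ℝ hj')).inv (by positivity))

lemma RW_apply_eq_zero_of_hasDerivAt {E : Finset (Fin n × Fin n)}
    {A : Finset (Fin n × Fin n × Fin n)} {q : Conf d n} (hq : q ∈ Chi A)
    {γ : ℝ → Conf d n} {δ : Conf d n} (hγ : HasDerivAt γ δ 0) (hγ0 : γ 0 = q)
    (hconst : ∀ t, FW E A (γ t) = FW E A q) : RW E A q δ = 0 := by
  subst hγ0
  have hF := (differentiableAt_FW E hq).hasFDerivAt.comp_hasDerivAt 0 hγ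
  rw [Function.comp_def, funext hconst] at hF
  exact hF.unique (hasDerivAt_const 0 _)

def affineMotion (p : Conf d n) : Pt d × (Pt d →ₗ[ℝ] Pt d) →ₗ[ℝ] Conf d n where
  toFun vK := WithLp.toLp 2 fun i => vK.1 + vK.2 (p i)
  map_add' a b := by
    ext i : 1
    simp only [PiLp.add_apply, Prod.fst_add, Prod.snd_add, LinearMap.add_apply]
    abel
  map_smul' c a := by ext i : 1; simp [smul_add]

lemma affineMotion_apply (p : Conf d n) (vK : Pt d × (Pt d →ₗ[ℝ] Pt d)) (i : Fin n) :
    affineMotion p vK i = vK.1 + vK.2 (p i) := rfl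

lemma RW_affineMotion_eq_zero {E : Finset (Fin n × Fin n)} {A : Finset (Fin n × Fin n × Fin n)}
    {q : Conf d n} (hq : q ∈ Chi A) (v : Pt d) {J : Pt d →ₗ[ℝ] Pt d} (hJ : IsSkewAdj J) (c : ℝ)
    (hc : c = 0 ∨ E = ∅) : RW E A q (affineMotion q (v, J + c • LinearMap.id)) = 0 := by
  set Jc := LinearMap.toContinuousLinearMap J
  let f (t : ℝ) (x : Pt d) : Pt d := Real.exp (c * t) • exp (t • Jc) x + t • v
  refine RW_apply_eq_zero_of_hasDerivAt hq (γ := fun t => WithLp.toLp 2 fun i => f t (q i)) ?_ ?_ ?_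
  · refine ((PiLp.hasFDerivAt_toLp 2 _).comp_hasDerivAt 0 (hasDerivAt_pi.2 fun i =>
      hasDerivAt_exp_mul_smul_exp_smul_add Jc c v (q i))).congr_deriv ?_
    ext i : 1
    simp only [Jc, LinearMap.coe_toContinuousLinearMap', ContinuousLinearEquiv.coe_coe,
      PiLp.continuousLinearEquiv_symm_apply, affineMotion_apply, LinearMap.add_apply,
      LinearMap.smul_apply, LinearMap.id_coe, id_eq]
    abel
  · ext i : 1
    simp [f, zero_smul ℝ Jc, exp_zero]
  · intro t
    refine FW_toLp_comp (Real.exp_pos (c * t)).ne'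
      (ContinuousLinearMap.exp_mem_unitary_of_mem_skewAdjoint (skewAdjoint.smul_mem t
        hJ.toContinuousLinearMap_mem_skewAdjoint)) (fun x y => ?_) A ?_ q
    · simp only [f, smul_sub, map_sub]
      abel
    · exact hc.imp (fun h => by simp [h]) id

lemma affineMotion_injective {p : Conf d n}
    (hspan : affineSpan ℝ (Set.range fun i => p i) = ⊤) : Function.Injective (affineMotion p) := by
  rw [← LinearMap.ker_eq_bot, LinearMap.ker_eq_bot']
  rintro ⟨v, K⟩ h
  have hpt (i : Fin n) : v + K (p i) = 0 := by simpa [affineMotion_apply] using congrArg (· i) h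
  have hK : K = 0 := by
    refine LinearMap.ext_on ((vectorSpan_def ℝ _).symm.trans
      (AffineSubspace.vectorSpan_eq_top_of_affineSpan_eq_top ℝ (Pt d) (Pt d) hspan)) ?_
    rintro _ ⟨_, ⟨i, rfl⟩, _, ⟨j, rfl⟩, rfl⟩
    simp only [vsub_eq_sub]
    rw [map_sub, LinearMap.zero_apply, sub_eq_zero,
      eq_neg_of_add_eq_zero_right (hpt i), eq_neg_of_add_eq_zero_right (hpt j)]
  obtain ⟨_, i, rfl⟩ := AffineSubspace.nonempty_of_affineSpan_eq_top ℝ (Pt d) (Pt d) hspan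
  simpa [hK] using hpt i

def motionSubmodule (p : Conf d n) (S : Submodule ℝ (Pt d →ₗ[ℝ] Pt d)) :
    Submodule ℝ (Conf d n) :=
  (Submodule.prod ⊤ S).map (affineMotion p)

lemma mem_motionSubmodule {p : Conf d n} {S : Submodule ℝ (Pt d →ₗ[ℝ] Pt d)} {δ : Conf d n} :
    δ ∈ motionSubmodule p S ↔ ∃ v, ∃ K ∈ S, ∀ i, δ i = v + K (p i) := by
  constructor
  · rintro ⟨⟨v, K⟩, ⟨-, hK⟩, rfl⟩
    exact ⟨v, K, hK, fun i => rfl⟩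
  · rintro ⟨v, K, hK, h⟩
    exact ⟨(v, K), ⟨trivial, hK⟩, PiLp.ext fun i => (h i).symm⟩

lemma finrank_motionSubmodule {p : Conf d n} (hspan : affineSpan ℝ (Set.range fun i => p i) = ⊤)
    (S : Submodule ℝ (Pt d →ₗ[ℝ] Pt d)) :
    Module.finrank ℝ (motionSubmodule p S) = Module.finrank ℝ ((⊤ : Submodule ℝ (Pt d)).prod S) :=
  (LinearEquiv.finrank_eq (Submodule.equivMapOfInjective _ (affineMotion_injective hspan) _)).symm

def skewAdjointMaps (d : ℕ) : Submodule ℝ (Pt d →ₗ[ℝ] Pt d) where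
  carrier := {J | IsSkewAdj J}
  add_mem' ha hb x y := by
    simp only [LinearMap.add_apply, inner_add_left, inner_add_right, ha x y, hb x y, neg_add]
  zero_mem' x y := by simp
  smul_mem' c J hJ x y := by
    simp only [LinearMap.smul_apply, real_inner_smul_left, real_inner_smul_right, hJ x y, mul_neg]

lemma trivialMotions_eq_motionSubmodule (p : Conf d n) :
    trivialMotions p = motionSubmodule p (skewAdjointMaps d) := by
  ext δ
  rw [SetLike.mem_coe, mem_motionSubmodule]
  rfl

lemma trivialMotionsScale_eq_motionSubmodule (p : Conf d n) :
    trivialMotionsScale p = motionSubmodule p (skewAdjointMaps d ⊔ ℝ ∙ LinearMap.id) := by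
  ext δ
  simp only [SetLike.mem_coe, mem_motionSubmodule, Submodule.mem_sup, Submodule.mem_span_singleton]
  constructor
  · rintro ⟨v, J, c, hJ, h⟩
    exact ⟨v, _, ⟨J, hJ, _, ⟨c, rfl⟩, rfl⟩, fun i => by simp [h i, add_assoc]⟩
  · rintro ⟨v, _, ⟨J, hJ, _, ⟨c, rfl⟩, rfl⟩, h⟩
    exact ⟨v, J, c, hJ, fun i => by simp [h i, add_assoc]⟩

lemma motionSubmodule_le_ker_RW {E : Finset (Fin n × Fin n)} {A : Finset (Fin n × Fin n × Fin n)}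
    {q : Conf d n} (hq : q ∈ Chi A) {S : Submodule ℝ (Pt d →ₗ[ℝ] Pt d)}
    (hS : ∀ K ∈ S, ∃ J, IsSkewAdj J ∧ ∃ c : ℝ, (c = 0 ∨ E = ∅) ∧ K = J + c • LinearMap.id) :
    motionSubmodule q S ≤ LinearMap.ker (RW E A q).toLinearMap := by
  rintro _ ⟨⟨v, K⟩, ⟨-, hK⟩, rfl⟩
  obtain ⟨J, hJ, c, hc, rfl⟩ := hS K hK
  exact RW_affineMotion_eq_zero hq v hJ c hc

theorem ker_RW_eq_motionSubmodule_of_isRegularPt {E : Finset (Fin n × Fin n)}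
    {A : Finset (Fin n × Fin n × Fin n)} {p q : Conf d n} {S : Submodule ℝ (Pt d →ₗ[ℝ] Pt d)}
    (hp : IsRegularPt E A p) (hq : IsRegularPt E A q)
    (hpspan : affineSpan ℝ (Set.range fun i => p i) = ⊤)
    (hqspan : affineSpan ℝ (Set.range fun i => q i) = ⊤)
    (hS : motionSubmodule q S ≤ LinearMap.ker (RW E A q).toLinearMap)
    (hker : LinearMap.ker (RW E A p).toLinearMap = motionSubmodule p S) :
    LinearMap.ker (RW E A q).toLinearMap = motionSubmodule q S := by
  refine (LinearMap.eq_ker_of_le_of_finrank_eq hS (le_antisymm (hp.2 q hq.1) (hq.2 p hp.1)) ?_).symm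
  rw [hker, finrank_motionSubmodule hqspan, finrank_motionSubmodule hpspan]

end Motions

theorem stmt11_general {d n : ℕ}
    (E : Finset (Fin n × Fin n)) (A : Finset (Fin n × Fin n × Fin n))
    (p q : Conf d n)
    (hpreg : IsRegularPt E A p) (hqreg : IsRegularPt E A q)
    (hpspan : affineSpan ℝ (Set.range (fun i => p i)) = ⊤)
    (hqspan : affineSpan ℝ (Set.range (fun i => q i)) = ⊤) :
    (E.Nonempty →
      (LinearMap.ker (RW E A p).toLinearMap : Set (Conf d n)) = trivialMotions p →
      (LinearMap.ker (RW E A q).toLinearMap : Set (Conf d n)) = trivialMotions q) ∧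
    (E = ∅ →
      (LinearMap.ker (RW E A p).toLinearMap : Set (Conf d n)) = trivialMotionsScale p →
      (LinearMap.ker (RW E A q).toLinearMap : Set (Conf d n)) = trivialMotionsScale q) := by
  refine ⟨fun _ hker => ?_, fun hE hker => ?_⟩
  · rw [trivialMotions_eq_motionSubmodule] at hker ⊢
    exact congrArg _ (ker_RW_eq_motionSubmodule_of_isRegularPt hpreg hqreg hpspan hqspan
      (motionSubmodule_le_ker_RW hqreg.1 fun J hJ => ⟨J, hJ, 0, Or.inl rfl, by simp⟩)
      (SetLike.coe_injective hker))
  · rw [trivialMotionsScale_eq_motionSubmodule] at hker ⊢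
    refine congrArg _ (ker_RW_eq_motionSubmodule_of_isRegularPt hpreg hqreg hpspan hqspan
      (motionSubmodule_le_ker_RW hqreg.1 ?_) (SetLike.coe_injective hker))
    intro K hK
    obtain ⟨J, hJ, _, hc, rfl⟩ := Submodule.mem_sup.mp hK
    obtain ⟨c, rfl⟩ := Submodule.mem_span_singleton.mp hc
    exact ⟨J, hJ, c, Or.inr hE, rfl⟩

/-- GIWR is a generic property: if `p, q` are regular points of `F_W` with
affinely spanning points and `(G, A, p)` is GIWR, then `(G, A, q)` is GIWR — both for
`E ≠ ∅` (trivial motions = translations and rotations) and for `E = ∅` (additionally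
scalings). -/
theorem stmt11 {d n : ℕ} (hd : d = 2 ∨ d = 3) (hn : 3 ≤ n)
    (E : Finset (Fin n × Fin n)) (A : Finset (Fin n × Fin n × Fin n))
    (hE : ∀ e ∈ E, e.1 ≠ e.2)
    (hA : ∀ a ∈ A, a.1 ≠ a.2.1 ∧ a.1 ≠ a.2.2 ∧ a.2.1 ≠ a.2.2)
    (p q : Conf d n)
    (hpreg : IsRegularPt E A p) (hqreg : IsRegularPt E A q)
    (hpspan : affineSpan ℝ (Set.range (fun i => p i)) = ⊤)
    (hqspan : affineSpan ℝ (Set.range (fun i => q i)) = ⊤) :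
    (E.Nonempty →
      (LinearMap.ker (RW E A p).toLinearMap : Set (Conf d n)) = trivialMotions p →
      (LinearMap.ker (RW E A q).toLinearMap : Set (Conf d n)) = trivialMotions q) ∧
    (E = ∅ →
      (LinearMap.ker (RW E A p).toLinearMap : Set (Conf d n)) = trivialMotionsScale p →
      (LinearMap.ker (RW E A q).toLinearMap : Set (Conf d n)) = trivialMotionsScale q) :=
  stmt11_general E A p q hpreg hqreg hpspan hqspan
end
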